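/- The function a₃⁺(t) = 3(t cosh t − sinh t)/t³ (extended by 1 at t = 0) is strictly increasing on [0, ∞), satisfies a₃⁺(0) = 1, and tends to infinity as t → ∞. -/

import Mathlib

/-!
On `t > 0` the function is `g t = 3 (t cosh t - sinh t) / t³`, whose derivative is
`3 ((t² + 3) sinh t - 3 t cosh t) / t⁴`. Positivity of this numerator, of `t cosh t - sinh t`,
and of `3 (t cosh t - sinh t) - t³` (which gives `g t > 1 = g 0`) all follow from the same
principle: each vanishes at `0` and has a derivative that is positive on `(0, ∞)`, the last link
being `(t cosh t - sinh t)' = t sinh t`. For large `t`, `t cosh t - sinh t ≥ t eᵗ / 4`, so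
`g t ≥ 3 eᵗ / (4 t²) → ∞`.
-/

open Real Filter Set

lemma pos_of_hasDerivAt_pos {f f' : ℝ → ℝ} {a t : ℝ} (hf : ∀ x, HasDerivAt f (f' x) x)
    (ha : f a = 0) (hf' : ∀ x, a < x → 0 < f' x) (ht : a < t) : 0 < f t := by
  have hmono : StrictMonoOn f (Ici a) :=
    strictMonoOn_of_hasDerivWithinAt_pos (convex_Ici a)
      (fun x _ => (hf x).continuousAt.continuousWithinAt)
      (fun x _ => (hf x).hasDerivWithinAt) (fun x hx => hf' x (by simpa using hx))
  simpa [ha] using hmono self_mem_Ici ht.le ht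

lemma hasDerivAt_mul_cosh_sub_sinh (x : ℝ) :
    HasDerivAt (fun t => t * cosh t - sinh t) (x * sinh x) x :=
  (((hasDerivAt_id' x).mul (hasDerivAt_cosh x)).sub (hasDerivAt_sinh x)).congr_deriv (by ring)

lemma mul_cosh_sub_sinh_pos {t : ℝ} (ht : 0 < t) : 0 < t * cosh t - sinh t :=
  pos_of_hasDerivAt_pos (f := fun t => t * cosh t - sinh t) hasDerivAt_mul_cosh_sub_sinh (by simp)
    (fun x hx => mul_pos hx (sinh_pos_iff.mpr hx)) ht

lemma pow_three_lt_three_mul_mul_cosh_sub_sinh {t : ℝ} (ht : 0 < t) :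
    t ^ 3 < 3 * (t * cosh t - sinh t) := by
  have hderiv (x : ℝ) : HasDerivAt (fun t => 3 * (t * cosh t - sinh t) - t ^ 3)
      (3 * x * (sinh x - x)) x :=
    (((hasDerivAt_mul_cosh_sub_sinh x).const_mul 3).sub (hasDerivAt_pow 3 x)).congr_deriv
      (by push_cast; ring)
  have := pos_of_hasDerivAt_pos hderiv (by simp)
    (fun x hx => mul_pos (by positivity) (sub_pos.mpr (self_lt_sinh_iff.mpr hx))) ht
  linarith

lemma three_mul_mul_cosh_lt {t : ℝ} (ht : 0 < t) : 3 * (t * cosh t) < (t ^ 2 + 3) * sinh t := by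
  have hderiv (x : ℝ) : HasDerivAt (fun t => (t ^ 2 + 3) * sinh t - 3 * (t * cosh t))
      (x * (x * cosh x - sinh x)) x :=
    ((((hasDerivAt_pow 2 x).add_const 3).mul (hasDerivAt_sinh x)).sub
      (((hasDerivAt_id' x).mul (hasDerivAt_cosh x)).const_mul 3)).congr_deriv (by push_cast; ring)
  have := pos_of_hasDerivAt_pos hderiv (by simp)
    (fun x hx => mul_pos hx (mul_cosh_sub_sinh_pos hx)) ht
  linarith

lemma hasDerivAt_mul_cosh_sub_sinh_div_pow_three {x : ℝ} (hx : x ≠ 0) :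
    HasDerivAt (fun t => 3 * (t * cosh t - sinh t) / t ^ 3)
      (3 * ((x ^ 2 + 3) * sinh x - 3 * (x * cosh x)) / x ^ 4) x :=
  (((hasDerivAt_mul_cosh_sub_sinh x).const_mul 3).div (hasDerivAt_pow 3 x)
    (pow_ne_zero 3 hx)).congr_deriv (by field_simp; ring)

lemma strictMonoOn_mul_cosh_sub_sinh_div_pow_three :
    StrictMonoOn (fun t => 3 * (t * cosh t - sinh t) / t ^ 3) (Ioi 0) := by
  have hderiv (x : ℝ) (hx : x ∈ Ioi 0) := hasDerivAt_mul_cosh_sub_sinh_div_pow_three hx.ne'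
  refine strictMonoOn_of_deriv_pos (convex_Ioi 0)
    (fun x hx => (hderiv x hx).continuousAt.continuousWithinAt) fun x hx => ?_
  rw [interior_Ioi] at hx
  rw [(hderiv x hx).deriv]
  have hx₀ : 0 < x := hx
  have := three_mul_mul_cosh_lt hx₀
  exact div_pos (by linarith) (by positivity)

lemma one_lt_mul_cosh_sub_sinh_div_pow_three {t : ℝ} (ht : 0 < t) :
    1 < 3 * (t * cosh t - sinh t) / t ^ 3 := by
  rw [one_lt_div (by positivity)]
  exact pow_three_lt_three_mul_mul_cosh_sub_sinh ht

lemma tendsto_mul_cosh_sub_sinh_div_pow_three_atTop :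
    Tendsto (fun t => 3 * (t * cosh t - sinh t) / t ^ 3) atTop atTop := by
  refine tendsto_atTop_mono' atTop ?_
    ((tendsto_exp_div_pow_atTop 2).const_mul_atTop (by norm_num : (0 : ℝ) < 3 / 4))
  filter_upwards [eventually_ge_atTop 2] with t ht
  have hcosh : exp t / 2 ≤ cosh t := by
    rw [cosh_eq]
    linarith [exp_pos (-t)]
  have hlower : t * exp t / 4 ≤ t * cosh t - sinh t :=
    calc t * exp t / 4 = t / 2 * (exp t / 2) := by ring
      _ ≤ t / 2 * cosh t := by gcongr
      _ ≤ (t - 1) * cosh t := by gcongr; linarith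
      _ ≤ t * cosh t - sinh t := by linarith [sinh_lt_cosh t]
  calc 3 / 4 * (exp t / t ^ 2) = 3 * (t * exp t / 4) / t ^ 3 := by field_simp
    _ ≤ 3 * (t * cosh t - sinh t) / t ^ 3 := by gcongr

/-- a₃⁺(t) = 3(t cosh t − sinh t)/t³ (with a₃⁺(0)=1) is strictly increasing on
    [0,∞), equals 1 at 0, and tends to infinity as t → ∞. -/
theorem a3plus_properties
    (a : ℝ → ℝ)
    (ha : ∀ t, a t = if t = 0 then 1 else 3 * (t * Real.cosh t - Real.sinh t) / t ^ 3) :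
    StrictMonoOn a (Set.Ici 0) ∧ a 0 = 1 ∧ Tendsto a atTop atTop := by
  have ha0 : a 0 = 1 := by simp [ha]
  have hpos : EqOn a (fun t => 3 * (t * cosh t - sinh t) / t ^ 3) (Ioi 0) :=
    fun t ht => by simp [ha, (mem_Ioi.mp ht).ne']
  refine ⟨fun s hs t ht hst => ?_, ha0, ?_⟩
  · have ht0 : 0 < t := lt_of_le_of_lt hs hst
    rcases (mem_Ici.mp hs).eq_or_lt with rfl | hs0
    · rw [ha0, hpos ht0]
      exact one_lt_mul_cosh_sub_sinh_div_pow_three ht0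
    · rw [hpos hs0, hpos ht0]
      exact strictMonoOn_mul_cosh_sub_sinh_div_pow_three hs0 ht0 hst
  · refine tendsto_mul_cosh_sub_sinh_div_pow_three_atTop.congr' ?_
    filter_upwards [eventually_gt_atTop 0] with t ht
    exact (hpos ht).symm
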